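/- arXiv:2009.08707 — 3 statements merged into one kernel-verified Lean document; each statement's English description precedes it below -/
import Mathlib

section
/- Let Σ be a 2-connected non-geodetic signed graph, and let u, v be an incompatible pair of vertices at minimum distance among all incompatible pairs in Σ. Then there exist two internally disjoint shortest paths from u to v of opposite signs. -/
open SimpleGraph

/-- The sign of a walk: the product of the signs of its edges. -/
def walkSign {V : Type*} {G : SimpleGraph V} (σ : V → V → ℤ) :
    {u v : V} → G.Walk u v → ℤ
  | _, _, SimpleGraph.Walk.nil => 1
  | _, _, @SimpleGraph.Walk.cons _ _ a b _ _ p => σ a b * walkSign σ p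

/-- A walk is a shortest path if its length equals the distance of its endpoints. -/
def IsShortest {V : Type*} {G : SimpleGraph V} {u v : V} (p : G.Walk u v) : Prop :=
  p.length = G.dist u v

/-- Two vertices are compatible if all shortest paths between them have the same sign. -/
def PairCompatible {V : Type*} (G : SimpleGraph V) (σ : V → V → ℤ) (u v : V) : Prop :=
  ∀ p q : G.Walk u v, IsShortest p → IsShortest q → walkSign σ p = walkSign σ q

/-- A graph is 2-connected: connected, and still connected after deleting any vertex. -/
def TwoConnected {V : Type*} (G : SimpleGraph V) : Prop :=
  G.Connected ∧ ∀ v : V, (G.induce {u : V | u ≠ v}).Connected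

/-- A graph is geodetic if between any two vertices there is a unique shortest path. -/
def Geodetic {V : Type*} (G : SimpleGraph V) : Prop :=
  ∀ (u v : V) (p q : G.Walk u v), IsShortest p → IsShortest q → p = q

/-- The internal vertices of a walk. -/
def walkInterior {V : Type*} {G : SimpleGraph V} {u v : V} (p : G.Walk u v) : List V :=
  p.support.tail.dropLast

/-! Two shortest paths of different signs cannot meet in an interior vertex `w`: both halves
`u → w` and `w → v` of each are shortest paths between pairs strictly closer than `u, v`, hence
compatible by minimality, so the two signs would agree. Signs are `±1`, so different signs are
opposite. -/

section

variable {V : Type*} {G : SimpleGraph V} {u v w : V}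

lemma walkSign_append (σ : V → V → ℤ) (p : G.Walk u v) (q : G.Walk v w) :
    walkSign σ (p.append q) = walkSign σ p * walkSign σ q := by
  induction p with
  | nil => simp [walkSign]
  | cons h p ih => simp [walkSign, ih, mul_assoc]

lemma walkSign_eq_one_or_neg_one {σ : V → V → ℤ}
    (hσ : ∀ u v : V, G.Adj u v → σ u v = 1 ∨ σ u v = -1) (p : G.Walk u v) :
    walkSign σ p = 1 ∨ walkSign σ p = -1 := by
  induction p with
  | nil => exact .inl rfl
  | cons h p ih =>
    rcases hσ _ _ h with h1 | h1 <;> rcases ih with h2 | h2 <;> simp [walkSign, h1, h2]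

lemma walkSign_eq_neg_of_ne {σ : V → V → ℤ}
    (hσ : ∀ u v : V, G.Adj u v → σ u v = 1 ∨ σ u v = -1) {p q : G.Walk u v}
    (hpq : walkSign σ p ≠ walkSign σ q) : walkSign σ p = -walkSign σ q := by
  rcases walkSign_eq_one_or_neg_one hσ p with h | h <;>
    rcases walkSign_eq_one_or_neg_one hσ q with h' | h' <;> simp_all

lemma SimpleGraph.Walk.IsPath.mem_support_and_ne_of_mem_walkInterior {p : G.Walk u v}
    (hp : p.IsPath) (hw : w ∈ walkInterior p) : w ∈ p.support ∧ w ≠ u ∧ w ≠ v := by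
  have htail : w ∈ p.support.tail := List.dropLast_subset _ hw
  have hdrop : w ∈ p.support.dropLast :=
    List.mem_of_mem_tail (by rwa [List.tail_dropLast])
  have hnodup := hp.support_nodup
  refine ⟨List.mem_of_mem_tail htail, ?_, ?_⟩
  · rintro rfl
    rw [← p.cons_tail_support, List.nodup_cons] at hnodup
    exact hnodup.1 htail
  · rintro rfl
    rw [← p.dropLast_support_concat, List.nodup_append] at hnodup
    exact hnodup.2.2 w hdrop w (List.mem_singleton_self w) rfl

lemma IsShortest.isPath {p : G.Walk u v} (hp : IsShortest p) : p.IsPath :=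
  p.isPath_of_length_eq_dist hp

lemma IsShortest.takeUntil [DecidableEq V] {p : G.Walk u v} (hp : IsShortest p)
    (hw : w ∈ p.support) : IsShortest (p.takeUntil w hw) :=
  length_eq_dist_of_subwalk hp (p.isSubwalk_takeUntil hw)

lemma IsShortest.dropUntil [DecidableEq V] {p : G.Walk u v} (hp : IsShortest p)
    (hw : w ∈ p.support) : IsShortest (p.dropUntil w hw) :=
  length_eq_dist_of_subwalk hp (p.isSubwalk_dropUntil hw)

lemma walkSign_eq_of_pairCompatible_of_mem_support [DecidableEq V] {σ : V → V → ℤ}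
    {p q : G.Walk u v} (hp : IsShortest p) (hq : IsShortest q)
    (hwp : w ∈ p.support) (hwq : w ∈ q.support)
    (huw : PairCompatible G σ u w) (hwv : PairCompatible G σ w v) :
    walkSign σ p = walkSign σ q := by
  rw [← p.take_spec hwp, ← q.take_spec hwq, walkSign_append, walkSign_append,
    huw _ _ (hp.takeUntil hwp) (hq.takeUntil hwq), hwv _ _ (hp.dropUntil hwp) (hq.dropUntil hwq)]

end

theorem incompatible_pair_internally_disjoint_general {V : Type*} (G : SimpleGraph V)
    (σ : V → V → ℤ)
    (hσ : ∀ u v : V, G.Adj u v → σ u v = 1 ∨ σ u v = -1)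
    {u v : V} (huv : ¬ PairCompatible G σ u v)
    (hmin : ∀ x y : V, ¬ PairCompatible G σ x y → G.dist u v ≤ G.dist x y) :
    ∃ (p q : G.Walk u v), p.IsPath ∧ q.IsPath ∧ IsShortest p ∧ IsShortest q ∧
      walkSign σ p = - walkSign σ q ∧ List.Disjoint (walkInterior p) (walkInterior q) := by
  classical
  have compatible_of_dist_lt {x y : V} (h : G.dist x y < G.dist u v) : PairCompatible G σ x y :=
    not_not.mp fun hxy => (hmin x y hxy).not_gt h
  obtain ⟨p, q, hp, hq, hpq⟩ : ∃ p q : G.Walk u v,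
      IsShortest p ∧ IsShortest q ∧ walkSign σ p ≠ walkSign σ q := by
    simpa [PairCompatible] using huv
  refine ⟨p, q, hp.isPath, hq.isPath, hp, hq, walkSign_eq_neg_of_ne hσ hpq,
    fun w hwp hwq => hpq ?_⟩
  obtain ⟨hwp, hwu, hwv⟩ := hp.isPath.mem_support_and_ne_of_mem_walkInterior hwp
  obtain ⟨hwq, -, -⟩ := hq.isPath.mem_support_and_ne_of_mem_walkInterior hwq
  refine walkSign_eq_of_pairCompatible_of_mem_support hp hq hwp hwq ?_ ?_
  · apply compatible_of_dist_lt
    rw [← hp.takeUntil hwp, ← hp]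
    exact p.length_takeUntil_lt_length hwp hwv
  · apply compatible_of_dist_lt
    rw [← hp.dropUntil hwp, ← hp]
    exact p.length_dropUntil_lt_length hwp hwu

/-- Let `u` and `v` be an incompatible pair of vertices with least distance in a
2-connected non-geodetic signed graph.  Then there are two internally disjoint
shortest paths from `u` to `v` of opposite signs. -/
theorem incompatible_pair_internally_disjoint {V : Type*} (G : SimpleGraph V)
    (σ : V → V → ℤ)
    (hσ : ∀ u v : V, G.Adj u v → σ u v = 1 ∨ σ u v = -1)
    (hsymm : ∀ u v : V, σ u v = σ v u)
    (h2c : TwoConnected G) (hng : ¬ Geodetic G)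
    {u v : V} (huv : ¬ PairCompatible G σ u v)
    (hmin : ∀ x y : V, ¬ PairCompatible G σ x y → G.dist u v ≤ G.dist x y) :
    ∃ (p q : G.Walk u v), p.IsPath ∧ q.IsPath ∧ IsShortest p ∧ IsShortest q ∧
      walkSign σ p = - walkSign σ q ∧ List.Disjoint (walkInterior p) (walkInterior q) :=
  incompatible_pair_internally_disjoint_general G σ hσ huv hmin
end

section
/- The Cartesian product Σ₁ × Σ₂ of two connected signed graphs is compatible if and only if both Σ₁ and Σ₂ are compatible. -/
open SimpleGraph

/-- A signed graph is compatible if all shortest paths between any two vertices have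
the same sign. -/
def Compatible {V : Type*} (G : SimpleGraph V) (σ : V → V → ℤ) : Prop :=
  ∀ (u v : V) (p q : G.Walk u v), IsShortest p → IsShortest q →
    walkSign σ p = walkSign σ q

/-- The signature of the Cartesian product of signed graphs: an edge inherits the sign
from the coordinate in which the move occurs. -/
def boxSign {V₁ V₂ : Type*} (σ₁ : V₁ → V₁ → ℤ) (σ₂ : V₂ → V₂ → ℤ)
    [DecidableEq V₁] [DecidableEq V₂] : V₁ × V₂ → V₁ × V₂ → ℤ :=
  fun x y => if x.2 = y.2 then σ₁ x.1 y.1 else σ₂ x.2 y.2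

/-! A walk in `G₁ □ G₂` projects onto a walk in each factor; the two lengths add up to its
length and the two signs multiply to its sign. Distances add up as well, so the projections of
a shortest walk are shortest, and compatible factors force all shortest walks of the product to
carry the same sign. Conversely, each fibre `G₁ × {b}` is an isometric, sign-preserving copy of
`G₁`, so a compatible product has compatible factors as soon as the other factor is nonempty. -/

@[simp]
lemma walkSign_cons {V : Type*} {G : SimpleGraph V} (σ : V → V → ℤ) {u v w : V}
    (h : G.Adj u v) (p : G.Walk v w) :
    walkSign σ (Walk.cons h p) = σ u v * walkSign σ p :=
  rfl

section

variable {α β : Type*} {G : SimpleGraph α} {H : SimpleGraph β}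

lemma SimpleGraph.dist_boxProd {x y : α × β} (h₁ : G.Reachable x.1 y.1)
    (h₂ : H.Reachable x.2 y.2) :
    (G □ H).dist x y = G.dist x.1 y.1 + H.dist x.2 y.2 := by
  have h := (reachable_boxProd.2 ⟨h₁, h₂⟩).coe_dist_eq_edist.trans (edist_boxProd x y)
  rw [← h₁.coe_dist_eq_edist, ← h₂.coe_dist_eq_edist] at h
  exact_mod_cast h

@[simp]
lemma SimpleGraph.Walk.length_boxProdLeft (b : β) {a₁ a₂ : α} (p : G.Walk a₁ a₂) :
    (p.boxProdLeft H b).length = p.length :=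
  Walk.length_map _ _

@[simp]
lemma SimpleGraph.Walk.length_boxProdRight (a : α) {b₁ b₂ : β} (p : H.Walk b₁ b₂) :
    (p.boxProdRight G a).length = p.length :=
  Walk.length_map _ _

lemma isShortest_boxProdLeft_iff (b : β) {a₁ a₂ : α} (p : G.Walk a₁ a₂) :
    IsShortest (p.boxProdLeft H b) ↔ IsShortest p := by
  rw [IsShortest, IsShortest, Walk.length_boxProdLeft,
    dist_boxProd (x := (a₁, b)) (y := (a₂, b)) p.reachable .rfl]
  simp

lemma isShortest_boxProdRight_iff (a : α) {b₁ b₂ : β} (p : H.Walk b₁ b₂) :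
    IsShortest (p.boxProdRight G a) ↔ IsShortest p := by
  rw [IsShortest, IsShortest, Walk.length_boxProdRight,
    dist_boxProd (x := (a, b₁)) (y := (a, b₂)) .rfl p.reachable]
  simp

variable [DecidableEq α] [DecidableEq β]

lemma IsShortest.ofBoxProd [DecidableRel G.Adj] [DecidableRel H.Adj] {x y : α × β}
    {p : (G □ H).Walk x y} (hp : IsShortest p) :
    IsShortest p.ofBoxProdLeft ∧ IsShortest p.ofBoxProdRight := by
  obtain ⟨a₁, b₁⟩ := x
  obtain ⟨a₂, b₂⟩ := y
  have hlen := Walk.length_boxProd p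
  have hdist := dist_boxProd p.ofBoxProdLeft.reachable p.ofBoxProdRight.reachable
  have hle₁ := dist_le p.ofBoxProdLeft
  have hle₂ := dist_le p.ofBoxProdRight
  unfold IsShortest at *
  omega

variable (σ₁ : α → α → ℤ) (σ₂ : β → β → ℤ)

lemma walkSign_boxProdLeft (b : β) {a₁ a₂ : α} (p : G.Walk a₁ a₂) :
    walkSign (boxSign σ₁ σ₂) (p.boxProdLeft H b) = walkSign σ₁ p := by
  induction p with
  | nil => rfl
  | cons h p ih =>
    rw [Walk.boxProdLeft, Walk.map_cons, walkSign_cons]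
    exact congrArg₂ (· * ·) (by simp [boxSign]) ih

lemma walkSign_boxProdRight (a : α) {b₁ b₂ : β} (p : H.Walk b₁ b₂) :
    walkSign (boxSign σ₁ σ₂) (p.boxProdRight G a) = walkSign σ₂ p := by
  induction p with
  | nil => rfl
  | cons h p ih =>
    rw [Walk.boxProdRight, Walk.map_cons, walkSign_cons]
    exact congrArg₂ (· * ·) (by simp [boxSign, h.ne]) ih

lemma walkSign_boxSign [DecidableRel G.Adj] [DecidableRel H.Adj] {x y : α × β}
    (p : (G □ H).Walk x y) :
    walkSign (boxSign σ₁ σ₂) p =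
      walkSign σ₁ p.ofBoxProdLeft * walkSign σ₂ p.ofBoxProdRight := by
  induction p with
  | nil => rfl
  | @cons x z y h p ih =>
    obtain ⟨a, b⟩ := x
    obtain ⟨a', b'⟩ := z
    rcases boxProd_adj.1 h with ⟨hG, hb⟩ | ⟨hH, ha⟩
    · obtain rfl : b = b' := hb
      simp only [Walk.ofBoxProdLeft, Walk.ofBoxProdRight, Or.by_cases, hG, SimpleGraph.irrefl,
        and_self, false_and, dif_pos, dite_false, walkSign_cons, ih, boxSign, if_true]
      ring
    · obtain rfl : a = a' := ha
      simp only [Walk.ofBoxProdLeft, Walk.ofBoxProdRight, Or.by_cases, hH, SimpleGraph.irrefl,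
        and_self, dif_pos, dite_false, walkSign_cons, ih, boxSign, hH.ne, if_false]
      ring

variable {σ₁ σ₂}

lemma Compatible.ofBoxProdLeft [Nonempty β] (h : Compatible (G □ H) (boxSign σ₁ σ₂)) :
    Compatible G σ₁ := by
  intro u v p q hp hq
  obtain ⟨b⟩ := ‹Nonempty β›
  simpa only [walkSign_boxProdLeft] using h _ _ (p.boxProdLeft H b) (q.boxProdLeft H b)
    ((isShortest_boxProdLeft_iff b p).2 hp) ((isShortest_boxProdLeft_iff b q).2 hq)

lemma Compatible.ofBoxProdRight [Nonempty α] (h : Compatible (G □ H) (boxSign σ₁ σ₂)) :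
    Compatible H σ₂ := by
  intro u v p q hp hq
  obtain ⟨a⟩ := ‹Nonempty α›
  simpa only [walkSign_boxProdRight] using h _ _ (p.boxProdRight G a) (q.boxProdRight G a)
    ((isShortest_boxProdRight_iff a p).2 hp) ((isShortest_boxProdRight_iff a q).2 hq)

lemma Compatible.boxProd (h₁ : Compatible G σ₁) (h₂ : Compatible H σ₂) :
    Compatible (G □ H) (boxSign σ₁ σ₂) := by
  classical
  intro x y p q hp hq
  rw [walkSign_boxSign, walkSign_boxSign, h₁ _ _ _ _ hp.ofBoxProd.1 hq.ofBoxProd.1,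
    h₂ _ _ _ _ hp.ofBoxProd.2 hq.ofBoxProd.2]

end

theorem boxProd_compatible_iff_general {V₁ V₂ : Type*} [DecidableEq V₁] [DecidableEq V₂]
    (G₁ : SimpleGraph V₁) (G₂ : SimpleGraph V₂)
    (h₁ : G₁.Connected) (h₂ : G₂.Connected)
    (σ₁ : V₁ → V₁ → ℤ) (σ₂ : V₂ → V₂ → ℤ) :
    Compatible (G₁ □ G₂) (boxSign σ₁ σ₂) ↔ Compatible G₁ σ₁ ∧ Compatible G₂ σ₂ := by
  have := h₁.nonempty
  have := h₂.nonempty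
  exact ⟨fun h => ⟨h.ofBoxProdLeft, h.ofBoxProdRight⟩, fun h => h.1.boxProd h.2⟩

/-- The Cartesian product of two connected signed graphs is compatible if and only if
both factors are compatible. -/
theorem boxProd_compatible_iff {V₁ V₂ : Type*} [DecidableEq V₁] [DecidableEq V₂]
    (G₁ : SimpleGraph V₁) (G₂ : SimpleGraph V₂)
    (h₁ : G₁.Connected) (h₂ : G₂.Connected)
    (σ₁ : V₁ → V₁ → ℤ) (σ₂ : V₂ → V₂ → ℤ)
    (hσ₁ : ∀ u v : V₁, G₁.Adj u v → σ₁ u v = 1 ∨ σ₁ u v = -1)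
    (hσ₂ : ∀ u v : V₂, G₂.Adj u v → σ₂ u v = 1 ∨ σ₂ u v = -1)
    (hsymm₁ : ∀ u v : V₁, σ₁ u v = σ₁ v u) (hsymm₂ : ∀ u v : V₂, σ₂ u v = σ₂ v u) :
    Compatible (G₁ □ G₂) (boxSign σ₁ σ₂) ↔ Compatible G₁ σ₁ ∧ Compatible G₂ σ₂ :=
  boxProd_compatible_iff_general G₁ G₂ h₁ h₂ σ₁ σ₂
end

section
/- For connected signed graphs Σ₁ and Σ₂ whose tensor product is connected: if Σ₁ ⊗ Σ₂ is compatible then both Σ₁ and Σ₂ are compatible. -/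
open SimpleGraph

/-- The tensor (categorical) product of two graphs. -/
def tensorProd {V₁ V₂ : Type*} (G₁ : SimpleGraph V₁) (G₂ : SimpleGraph V₂) :
    SimpleGraph (V₁ × V₂) where
  Adj x y := G₁.Adj x.1 y.1 ∧ G₂.Adj x.2 y.2
  symm := ⟨fun x y h => ⟨h.1.symm, h.2.symm⟩⟩
  loopless := ⟨fun x h => G₁.loopless.irrefl _ h.1⟩

/-- The signature of the tensor product of signed graphs: the product of the signs of
the projected edges. -/
def tensorSign {V₁ V₂ : Type*} (σ₁ : V₁ → V₁ → ℤ) (σ₂ : V₂ → V₂ → ℤ) :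
    V₁ × V₂ → V₁ × V₂ → ℤ :=
  fun x y => σ₁ x.1 y.1 * σ₂ x.2 y.2

/-!
Let `p`, `q` be shortest `u`–`v` paths of length `n` in `Σ₁`, with `u ≠ v`. Connectivity of
`Σ₁ ⊗ Σ₂` forces an edge in `G₂`, and bouncing along it gives a walk `r` of length `n` in `Σ₂`.
Walking `p` and `r` (resp. `q` and `r`) in lockstep gives two walks of length `n` in the
product; they are shortest because projecting onto the first factor does not increase
distances. Compatibility of the product then gives `sgn p · sgn r = sgn q · sgn r`, and
`sgn r = ±1` cancels. The second factor follows by swapping the factors.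
-/

section General

variable {V V' : Type*} {G : SimpleGraph V} {G' : SimpleGraph V'}

theorem walkSign_ne_zero {σ : V → V → ℤ} (hσ : ∀ u v, G.Adj u v → σ u v ≠ 0) :
    ∀ {u v : V} (p : G.Walk u v), walkSign σ p ≠ 0
  | _, _, .nil => one_ne_zero
  | _, _, .cons h p => mul_ne_zero (hσ _ _ h) (walkSign_ne_zero hσ p)

theorem walkSign_map {σ : V → V → ℤ} {σ' : V' → V' → ℤ} (f : G →g G')
    (hσ : ∀ x y, σ' (f x) (f y) = σ x y) :
    ∀ {u v : V} (p : G.Walk u v), walkSign σ' (p.map f) = walkSign σ p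
  | _, _, .nil => rfl
  | _, _, .cons _ p => by simp only [Walk.map_cons, walkSign, hσ, walkSign_map f hσ p]

theorem IsShortest.walkSign_eq_one {σ : V → V → ℤ} {u : V} {p : G.Walk u u}
    (hp : IsShortest p) : walkSign σ p = 1 := by
  cases p with
  | nil => rfl
  | cons _ _ => simp [IsShortest] at hp

theorem SimpleGraph.Adj.exists_walk_length_eq {w w' : V} (h : G.Adj w w') (n : ℕ) :
    ∃ b, ∃ r : G.Walk w b, r.length = n := by
  induction n generalizing w w' with
  | zero => exact ⟨w, .nil, rfl⟩
  | succ n ih =>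
    obtain ⟨b, r, hr⟩ := ih h.symm
    exact ⟨b, .cons h r, by simp [hr]⟩

theorem SimpleGraph.Reachable.dist_map_le (f : G →g G') {u v : V} (h : G.Reachable u v) :
    G'.dist (f u) (f v) ≤ G.dist u v := by
  obtain ⟨p, hp⟩ := h.exists_walk_length_eq_dist
  simpa [hp] using dist_le (p.map f)

theorem IsShortest.map_iso {u v : V} {p : G.Walk u v} (hp : IsShortest p) (e : G ≃g G') :
    IsShortest (p.map e.toHom) := by
  have hle : G.dist u v ≤ G'.dist (e u) (e v) := by
    simpa using Reachable.dist_map_le e.symm.toHom ⟨p.map e.toHom⟩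
  have hge := dist_le (p.map e.toHom)
  unfold IsShortest at hp ⊢
  rw [Walk.length_map] at hge ⊢
  exact le_antisymm (hp ▸ hle) hge

theorem Compatible.of_iso {σ : V → V → ℤ} {σ' : V' → V' → ℤ} (h : Compatible G' σ')
    (e : G ≃g G') (hσ : ∀ x y, σ' (e x) (e y) = σ x y) : Compatible G σ := by
  intro u v p q hp hq
  rw [← walkSign_map e.toHom hσ p, ← walkSign_map e.toHom hσ q]
  exact h _ _ _ _ (hp.map_iso e) (hq.map_iso e)

end General

section TensorProd

variable {V₁ V₂ : Type*} {G₁ : SimpleGraph V₁} {G₂ : SimpleGraph V₂}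

def tensorProdFst : tensorProd G₁ G₂ →g G₁ := ⟨Prod.fst, fun h => h.1⟩

variable (G₁ G₂) in
def tensorProdComm : tensorProd G₁ G₂ ≃g tensorProd G₂ G₁ :=
  ⟨Equiv.prodComm V₁ V₂, and_comm⟩

def zipWalk : ∀ {u v : V₁} {a b : V₂} (p : G₁.Walk u v) (r : G₂.Walk a b),
    p.length = r.length → (tensorProd G₁ G₂).Walk (u, a) (v, b)
  | _, _, _, _, .nil, .nil, _ => .nil
  | _, _, _, _, .cons h p, .cons h' r, hl => .cons ⟨h, h'⟩ (zipWalk p r (by simpa using hl))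
  | _, _, _, _, .nil, .cons _ _, hl => absurd hl (by simp)
  | _, _, _, _, .cons _ _, .nil, hl => absurd hl (by simp)

theorem length_zipWalk : ∀ {u v : V₁} {a b : V₂} (p : G₁.Walk u v) (r : G₂.Walk a b)
    (hl : p.length = r.length), (zipWalk p r hl).length = p.length
  | _, _, _, _, .nil, .nil, _ => rfl
  | _, _, _, _, .cons _ p, .cons _ r, hl => congrArg (· + 1) (length_zipWalk p r _)
  | _, _, _, _, .nil, .cons _ _, hl => absurd hl (by simp)
  | _, _, _, _, .cons _ _, .nil, hl => absurd hl (by simp)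

theorem walkSign_zipWalk (σ₁ : V₁ → V₁ → ℤ) (σ₂ : V₂ → V₂ → ℤ) :
    ∀ {u v : V₁} {a b : V₂} (p : G₁.Walk u v) (r : G₂.Walk a b) (hl : p.length = r.length),
    walkSign (tensorSign σ₁ σ₂) (zipWalk p r hl) = walkSign σ₁ p * walkSign σ₂ r
  | _, _, _, _, .nil, .nil, _ => rfl
  | _, _, _, _, .cons _ p, .cons _ r, hl => by
    simp only [zipWalk, walkSign, tensorSign, walkSign_zipWalk σ₁ σ₂ p r (by simpa using hl)]
    ring
  | _, _, _, _, .nil, .cons _ _, hl => absurd hl (by simp)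
  | _, _, _, _, .cons _ _, .nil, hl => absurd hl (by simp)

theorem isShortest_zipWalk {u v : V₁} {a b : V₂} {p : G₁.Walk u v} (hp : IsShortest p)
    (r : G₂.Walk a b) (hl : p.length = r.length) : IsShortest (zipWalk p r hl) := by
  have hle : G₁.dist u v ≤ (tensorProd G₁ G₂).dist (u, a) (v, b) :=
    Reachable.dist_map_le tensorProdFst ⟨zipWalk p r hl⟩
  have hge := dist_le (zipWalk p r hl)
  unfold IsShortest at hp ⊢
  rw [length_zipWalk] at hge ⊢
  omega

theorem SimpleGraph.Preconnected.exists_adj_snd_of_tensorProd [Nonempty V₂]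
    (hconn : (tensorProd G₁ G₂).Preconnected) {u v : V₁} (huv : u ≠ v) :
    ∃ a b, G₂.Adj a b := by
  obtain ⟨a⟩ := ‹Nonempty V₂›
  obtain ⟨W⟩ := hconn (u, a) (v, a)
  cases W with
  | nil => exact absurd rfl huv
  | cons h _ => exact ⟨_, _, h.2⟩

theorem compatible_left_of_tensorProd {σ₁ : V₁ → V₁ → ℤ} {σ₂ : V₂ → V₂ → ℤ}
    (hconn : (tensorProd G₁ G₂).Connected) (hσ₂ : ∀ a b, G₂.Adj a b → σ₂ a b ≠ 0)
    (hc : Compatible (tensorProd G₁ G₂) (tensorSign σ₁ σ₂)) : Compatible G₁ σ₁ := by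
  intro u v p q hp hq
  obtain rfl | huv := eq_or_ne u v
  · rw [hp.walkSign_eq_one, hq.walkSign_eq_one]
  have : Nonempty V₂ := hconn.nonempty.map Prod.snd
  obtain ⟨a, a', ha⟩ := hconn.preconnected.exists_adj_snd_of_tensorProd huv
  obtain ⟨b, r, hr⟩ := ha.exists_walk_length_eq p.length
  have hqr : q.length = r.length := by unfold IsShortest at hp hq; omega
  have hsign := hc _ _ _ _ (isShortest_zipWalk hp r hr.symm) (isShortest_zipWalk hq r hqr)
  rw [walkSign_zipWalk, walkSign_zipWalk] at hsign
  exact mul_right_cancel₀ (walkSign_ne_zero hσ₂ r) hsign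

theorem compatible_right_of_tensorProd {σ₁ : V₁ → V₁ → ℤ} {σ₂ : V₂ → V₂ → ℤ}
    (hconn : (tensorProd G₁ G₂).Connected) (hσ₁ : ∀ a b, G₁.Adj a b → σ₁ a b ≠ 0)
    (hc : Compatible (tensorProd G₁ G₂) (tensorSign σ₁ σ₂)) : Compatible G₂ σ₂ :=
  compatible_left_of_tensorProd ((tensorProdComm G₁ G₂).connected_iff.mp hconn) hσ₁
    (hc.of_iso (tensorProdComm G₂ G₁) fun _ _ => mul_comm _ _)

end TensorProd

theorem tensorProd_compatible_general {V₁ V₂ : Type*}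
    (G₁ : SimpleGraph V₁) (G₂ : SimpleGraph V₂)
    (hconn : (tensorProd G₁ G₂).Connected)
    (σ₁ : V₁ → V₁ → ℤ) (σ₂ : V₂ → V₂ → ℤ)
    (hσ₁ : ∀ u v : V₁, G₁.Adj u v → σ₁ u v = 1 ∨ σ₁ u v = -1)
    (hσ₂ : ∀ u v : V₂, G₂.Adj u v → σ₂ u v = 1 ∨ σ₂ u v = -1)
    (hc : Compatible (tensorProd G₁ G₂) (tensorSign σ₁ σ₂)) :
    Compatible G₁ σ₁ ∧ Compatible G₂ σ₂ := by
  have hσ₁' : ∀ u v, G₁.Adj u v → σ₁ u v ≠ 0 := fun u v h => by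
    rcases hσ₁ u v h with h | h <;> simp [h]
  have hσ₂' : ∀ u v, G₂.Adj u v → σ₂ u v ≠ 0 := fun u v h => by
    rcases hσ₂ u v h with h | h <;> simp [h]
  exact ⟨compatible_left_of_tensorProd hconn hσ₂' hc,
    compatible_right_of_tensorProd hconn hσ₁' hc⟩

/-- For connected signed graphs `Σ₁`, `Σ₂` whose tensor product is connected:
if `Σ₁ ⊗ Σ₂` is compatible, then both `Σ₁` and `Σ₂` are compatible. -/
theorem tensorProd_compatible {V₁ V₂ : Type*}
    (G₁ : SimpleGraph V₁) (G₂ : SimpleGraph V₂)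
    (h₁ : G₁.Connected) (h₂ : G₂.Connected)
    (hconn : (tensorProd G₁ G₂).Connected)
    (σ₁ : V₁ → V₁ → ℤ) (σ₂ : V₂ → V₂ → ℤ)
    (hσ₁ : ∀ u v : V₁, G₁.Adj u v → σ₁ u v = 1 ∨ σ₁ u v = -1)
    (hσ₂ : ∀ u v : V₂, G₂.Adj u v → σ₂ u v = 1 ∨ σ₂ u v = -1)
    (hsymm₁ : ∀ u v : V₁, σ₁ u v = σ₁ v u) (hsymm₂ : ∀ u v : V₂, σ₂ u v = σ₂ v u)
    (hc : Compatible (tensorProd G₁ G₂) (tensorSign σ₁ σ₂)) :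
    Compatible G₁ σ₁ ∧ Compatible G₂ σ₂ :=
  tensorProd_compatible_general G₁ G₂ hconn σ₁ σ₂ hσ₁ hσ₂ hc
end
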